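/- Inactive leakage constraints (Corollary 1). Let (U₀,U₁,U₂,Y₁,Y₂) be random variables taking values in finite sets, and let L₁, L₂ ≥ 0. For these fixed random variables, define R̃(L₁,L₂) ⊆ ℝ₊² as the set of pairs (R₁,R₂) ∈ ℝ₊² satisfying all of: (i) R₁ ≤ I(U₁;Y₁|U₀) − I(U₁;U₂|U₀) − I(U₁;Y₂|U₀,U₂) + L₁; (ii) R₁ ≤ I(U₀,U₁;Y₁); (iii) R₂ ≤ I(U₂;Y₂|U₀) − I(U₁;U₂|U₀) − I(U₂;Y₁|U₀,U₁) + L₂; (iv) R₂ ≤ I(U₀,U₂;Y₂); (v) R₁+R₂ ≤ I(U₀,U₁;Y₁) + I(U₂;Y₂|U₀) − I(U₁;U₂|U₀) − I(U₁;Y₂|U₀,U₂) + L₁; (vi) R₁+R₂ ≤ I(U₀,U₁;Y₁) + I(U₂;Y₂|U₀) − I(U₁;U₂|U₀); (vii) R₁+R₂ ≤ I(U₁;Y₁|U₀) + I(U₀,U₂;Y₂) − I(U₁;U₂|U₀) − I(U₂;Y₁|U₀,U₁) + L₂; (viii) R₁+R₂ ≤ I(U₁;Y₁|U₀) + I(U₀,U₂;Y₂)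 − I(U₁;U₂|U₀). Let R̃(∞,L₂) be the set defined by dropping constraints (i) and (v), R̃(L₁,∞) by dropping (iii) and (vii), and R̃(∞,∞) by dropping (i), (iii), (v) and (vii). Define L₁* = I(U₀;Y₁) + I(U₁;U₂,Y₂|U₀) and L₂* = I(U₀;Y₂) + I(U₂;U₁,Y₁|U₀). Then: (1) if L₁ ≥ L₁* then R̃(L₁,L₂) = R̃(∞,L₂); (2) if L₂ ≥ L₂* then R̃(L₁,L₂) = R̃(L₁,∞); (3) if L₁ ≥ L₁* and L₂ ≥ L₂* then R̃(L₁,L₂) = R̃(∞,∞). -/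

import Mathlib

/-!
By the chain rule, `L₁* = I(U₀;Y₁) + I(U₁;U₂|U₀) + I(U₁;Y₂|U₀,U₂)` and
`I(U₀,U₁;Y₁) = I(U₀;Y₁) + I(U₁;Y₁|U₀)`. So once `L₁ ≥ L₁*`, constraint (i) follows from (ii),
and (v) follows from (vi) because `I(U₀;Y₁)` and `I(U₁;U₂|U₀)` are nonnegative (Gibbs'
inequality). The constraints (iii), (vii) are handled symmetrically, and (3) combines the two.
-/

open scoped Classical BigOperators

noncomputable section

/-- Entropy (base 2) of a finitely supported distribution given as a function. -/
def entFun {α : Type} [Fintype α] (q : α → ℝ) : ℝ :=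
  -∑ a, q a * Real.logb 2 (q a)

/-- Distribution (pushforward) of the random variable `A` under the pmf `p`. -/
def distOf {Ω α : Type} [Fintype Ω] [Fintype α] (p : Ω → ℝ) (A : Ω → α) : α → ℝ :=
  fun a => ∑ ω, if A ω = a then p ω else 0

/-- Shannon entropy `H(A)` (base 2). -/
def Hent {Ω α : Type} [Fintype Ω] [Fintype α] (p : Ω → ℝ) (A : Ω → α) : ℝ :=
  entFun (distOf p A)

/-- Conditional entropy `H(A|B)`. -/
def CHent {Ω α β : Type} [Fintype Ω] [Fintype α] [Fintype β]
    (p : Ω → ℝ) (A : Ω → α) (B : Ω → β) : ℝ :=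
  Hent p (fun ω => (A ω, B ω)) - Hent p B

/-- Mutual information `I(A;B)`. -/
def MI {Ω α β : Type} [Fintype Ω] [Fintype α] [Fintype β]
    (p : Ω → ℝ) (A : Ω → α) (B : Ω → β) : ℝ :=
  Hent p A + Hent p B - Hent p (fun ω => (A ω, B ω))

/-- Conditional mutual information `I(A;B|C)`. -/
def CMI {Ω α β γ : Type} [Fintype Ω] [Fintype α] [Fintype β] [Fintype γ]
    (p : Ω → ℝ) (A : Ω → α) (B : Ω → β) (C : Ω → γ) : ℝ :=
  Hent p (fun ω => (A ω, C ω)) + Hent p (fun ω => (B ω, C ω))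
    - Hent p (fun ω => (A ω, B ω, C ω)) - Hent p C

/-- `p` is a probability mass function on the finite type `α`. -/
def IsPMF {α : Type} [Fintype α] (p : α → ℝ) : Prop :=
  (∀ a, 0 ≤ p a) ∧ ∑ a, p a = 1

/-- The region `R̃(L1,L2)` of Corollary 1, where a leakage threshold of `none`
means the corresponding leakage constraints are dropped (i.e. `L = ∞`). -/
def RtOpt {Ω A0 A1 A2 B1 B2 : Type} [Fintype Ω] [Fintype A0] [Fintype A1]
    [Fintype A2] [Fintype B1] [Fintype B2] (p : Ω → ℝ)
    (U0 : Ω → A0) (U1 : Ω → A1) (U2 : Ω → A2) (Y1 : Ω → B1) (Y2 : Ω → B2)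
    (L1 L2 : Option ℝ) : Set (ℝ × ℝ) :=
  {r : ℝ × ℝ | 0 ≤ r.1 ∧ 0 ≤ r.2 ∧
    (∀ l1 ∈ L1,
      r.1 ≤ CMI p U1 Y1 U0 - CMI p U1 U2 U0
          - CMI p U1 Y2 (fun ω => (U0 ω, U2 ω)) + l1 ∧
      r.1 + r.2 ≤ MI p (fun ω => (U0 ω, U1 ω)) Y1 + CMI p U2 Y2 U0
          - CMI p U1 U2 U0 - CMI p U1 Y2 (fun ω => (U0 ω, U2 ω)) + l1) ∧
    (∀ l2 ∈ L2,
      r.2 ≤ CMI p U2 Y2 U0 - CMI p U1 U2 U0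
          - CMI p U2 Y1 (fun ω => (U0 ω, U1 ω)) + l2 ∧
      r.1 + r.2 ≤ CMI p U1 Y1 U0 + MI p (fun ω => (U0 ω, U2 ω)) Y2
          - CMI p U1 U2 U0 - CMI p U2 Y1 (fun ω => (U0 ω, U1 ω)) + l2) ∧
    r.1 ≤ MI p (fun ω => (U0 ω, U1 ω)) Y1 ∧
    r.2 ≤ MI p (fun ω => (U0 ω, U2 ω)) Y2 ∧
    r.1 + r.2 ≤ MI p (fun ω => (U0 ω, U1 ω)) Y1 + CMI p U2 Y2 U0 - CMI p U1 U2 U0 ∧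
    r.1 + r.2 ≤ CMI p U1 Y1 U0 + MI p (fun ω => (U0 ω, U2 ω)) Y2 - CMI p U1 U2 U0}

open Real

section Distribution

variable {Ω α β γ : Type} [Fintype Ω] [Fintype α] [Fintype β] [Fintype γ] {p : Ω → ℝ}

lemma sum_distOf_mul (p : Ω → ℝ) (X : Ω → α) (g : α → ℝ) :
    ∑ a, distOf p X a * g a = ∑ ω, p ω * g (X ω) := by
  simp_rw [distOf, Finset.sum_mul, ite_mul, zero_mul]
  rw [Finset.sum_comm]
  simp

lemma sum_distOf (p : Ω → ℝ) (X : Ω → α) : ∑ a, distOf p X a = ∑ ω, p ω := by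
  simpa using sum_distOf_mul p X fun _ => 1

lemma sum_distOf_prod_left (p : Ω → ℝ) (A : Ω → α) (C : Ω → γ) (c : γ) :
    ∑ a, distOf p (fun ω => (A ω, C ω)) (a, c) = distOf p C c := by
  unfold distOf
  rw [Finset.sum_comm]
  refine Finset.sum_congr rfl fun ω _ => ?_
  by_cases h : C ω = c <;> simp [Prod.ext_iff, h]

lemma distOf_nonneg (hp : ∀ ω, 0 ≤ p ω) (X : Ω → α) (a : α) : 0 ≤ distOf p X a :=
  Finset.sum_nonneg fun ω _ => by split <;> simp [hp ω]

lemma le_distOf_apply (hp : ∀ ω, 0 ≤ p ω) (X : Ω → α) (ω : Ω) : p ω ≤ distOf p X (X ω) := by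
  unfold distOf
  simpa using Finset.single_le_sum (f := fun ω' => if X ω' = X ω then p ω' else 0)
    (fun ω' _ => by split <;> simp [hp ω']) (Finset.mem_univ ω)

lemma distOf_comp_apply {f : α → β} (hf : f.Injective) (p : Ω → ℝ) (X : Ω → α) (a : α) :
    distOf p (fun ω => f (X ω)) (f a) = distOf p X a := by
  simp [distOf, hf.eq_iff]

end Distribution

section Entropy

variable {Ω α β γ δ : Type} [Fintype Ω] [Fintype α] [Fintype β] [Fintype γ] [Fintype δ]
  {p : Ω → ℝ}

lemma Hent_eq_neg_sum (p : Ω → ℝ) (X : Ω → α) :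
    Hent p X = -∑ ω, p ω * logb 2 (distOf p X (X ω)) := by
  rw [Hent, entFun, sum_distOf_mul p X fun a => logb 2 (distOf p X a)]

lemma Hent_congr {X : Ω → α} {Y : Ω → β} (f : α → β) (g : β → α) (hgf : ∀ a, g (f a) = a)
    (h : ∀ ω, f (X ω) = Y ω) : Hent p X = Hent p Y := by
  obtain rfl : (fun ω => f (X ω)) = Y := funext h
  simp only [Hent_eq_neg_sum, distOf_comp_apply (Function.LeftInverse.injective hgf)]

lemma Hent_const (hp : IsPMF p) : Hent p (fun _ => ()) = 0 := by
  simp [Hent, entFun, distOf, hp.2]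

lemma MI_eq_CMI_const (hp : IsPMF p) (A : Ω → α) (B : Ω → β) :
    MI p A B = CMI p A B (fun _ => ()) := by
  have hA : Hent p A = Hent p (fun ω => (A ω, ())) :=
    Hent_congr (fun a => (a, ())) Prod.fst (fun _ => rfl) fun _ => rfl
  have hB : Hent p B = Hent p (fun ω => (B ω, ())) :=
    Hent_congr (fun b => (b, ())) Prod.fst (fun _ => rfl) fun _ => rfl
  have hAB : Hent p (fun ω => (A ω, B ω)) = Hent p (fun ω => (A ω, B ω, ())) :=
    Hent_congr (fun x : α × β => (x.1, x.2, ())) (fun y => (y.1, y.2.1)) (fun _ => rfl)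
      fun _ => rfl
  rw [MI, CMI, hA, hB, hAB, Hent_const hp]
  ring

lemma CMI_comm (p : Ω → ℝ) (A : Ω → α) (B : Ω → β) (C : Ω → γ) :
    CMI p A B C = CMI p B A C := by
  have h : Hent p (fun ω => (A ω, B ω, C ω)) = Hent p (fun ω => (B ω, A ω, C ω)) :=
    Hent_congr (fun x : α × β × γ => (x.2.1, x.1, x.2.2)) (fun y => (y.2.1, y.1, y.2.2))
      (fun _ => rfl) fun _ => rfl
  rw [CMI, CMI, h]
  ring

lemma MI_prod_left (p : Ω → ℝ) (A : Ω → α) (B : Ω → β) (C : Ω → γ) :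
    MI p (fun ω => (C ω, A ω)) B = MI p C B + CMI p A B C := by
  have hCA : Hent p (fun ω => (C ω, A ω)) = Hent p (fun ω => (A ω, C ω)) :=
    Hent_congr Prod.swap Prod.swap (fun _ => rfl) fun _ => rfl
  have hCB : Hent p (fun ω => (C ω, B ω)) = Hent p (fun ω => (B ω, C ω)) :=
    Hent_congr Prod.swap Prod.swap (fun _ => rfl) fun _ => rfl
  have hCAB : Hent p (fun ω => ((C ω, A ω), B ω)) = Hent p (fun ω => (A ω, B ω, C ω)) :=
    Hent_congr (fun x : (γ × α) × β => (x.1.2, x.2, x.1.1)) (fun y => ((y.2.2, y.1), y.2.1))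
      (fun _ => rfl) fun _ => rfl
  rw [MI, MI, CMI, hCA, hCB, hCAB]
  ring

lemma CMI_prod_right (p : Ω → ℝ) (A : Ω → α) (B : Ω → β) (C : Ω → γ) (D : Ω → δ) :
    CMI p A (fun ω => (B ω, D ω)) C = CMI p A B C + CMI p A D (fun ω => (C ω, B ω)) := by
  have hBDC : Hent p (fun ω => ((B ω, D ω), C ω)) = Hent p (fun ω => (D ω, C ω, B ω)) :=
    Hent_congr (fun x : (β × δ) × γ => (x.1.2, x.2, x.1.1)) (fun y => ((y.2.2, y.1), y.2.1))
      (fun _ => rfl) fun _ => rfl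
  have hABDC : Hent p (fun ω => (A ω, (B ω, D ω), C ω))
      = Hent p (fun ω => (A ω, D ω, C ω, B ω)) :=
    Hent_congr (fun x : α × (β × δ) × γ => (x.1, x.2.1.2, x.2.2, x.2.1.1))
      (fun y => (y.1, (y.2.2.2, y.2.1), y.2.2.1)) (fun _ => rfl) fun _ => rfl
  have hABC : Hent p (fun ω => (A ω, B ω, C ω)) = Hent p (fun ω => (A ω, C ω, B ω)) :=
    Hent_congr (fun x : α × β × γ => (x.1, x.2.2, x.2.1)) (fun y => (y.1, y.2.2, y.2.1))
      (fun _ => rfl) fun _ => rfl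
  have hBC : Hent p (fun ω => (B ω, C ω)) = Hent p (fun ω => (C ω, B ω)) :=
    Hent_congr Prod.swap Prod.swap (fun _ => rfl) fun _ => rfl
  rw [CMI, CMI, CMI, hBDC, hABDC, hABC, hBC]
  ring

end Entropy

lemma Finset.sum_mul_log_nonpos {ι : Type} (s : Finset ι) {p g : ι → ℝ} (hp : ∀ i ∈ s, 0 ≤ p i)
    (hg : ∀ i ∈ s, 0 < p i → 0 < g i) (h : ∑ i ∈ s, p i * g i ≤ ∑ i ∈ s, p i) :
    ∑ i ∈ s, p i * log (g i) ≤ 0 := by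
  have hterm : ∀ i ∈ s, p i * log (g i) ≤ p i * g i - p i := by
    intro i hi
    rcases (hp i hi).eq_or_lt with h0 | h0
    · simp [← h0]
    · nlinarith [log_le_sub_one_of_pos (hg i hi h0)]
  calc ∑ i ∈ s, p i * log (g i) ≤ ∑ i ∈ s, (p i * g i - p i) := Finset.sum_le_sum hterm
    _ ≤ 0 := by rw [Finset.sum_sub_distrib]; linarith

section ConditionalMutualInformation

variable {Ω α β γ : Type} [Fintype Ω] [Fintype α] [Fintype β] [Fintype γ] {p : Ω → ℝ}

/-- The density of the conditionally independent coupling of `A` and `B` given `C` with respect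
to the law of `(A, B, C)`. -/
def cmiRatio (p : Ω → ℝ) (A : Ω → α) (B : Ω → β) (C : Ω → γ) (x : α × β × γ) : ℝ :=
  distOf p (fun ω => (A ω, C ω)) (x.1, x.2.2) * distOf p (fun ω => (B ω, C ω)) (x.2.1, x.2.2)
    / (distOf p (fun ω => (A ω, B ω, C ω)) x * distOf p C x.2.2)

lemma CMI_eq_neg_sum_logb_cmiRatio (hp : ∀ ω, 0 ≤ p ω) (A : Ω → α) (B : Ω → β) (C : Ω → γ) :
    CMI p A B C = -∑ ω, p ω * logb 2 (cmiRatio p A B C (A ω, B ω, C ω)) := by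
  rw [CMI, Hent_eq_neg_sum p (fun ω => (A ω, C ω)), Hent_eq_neg_sum p (fun ω => (B ω, C ω)),
    Hent_eq_neg_sum p (fun ω => (A ω, B ω, C ω)), Hent_eq_neg_sum p C, ← Finset.sum_neg_distrib]
  simp only [← Finset.sum_add_distrib, ← Finset.sum_neg_distrib, ← Finset.sum_sub_distrib]
  refine Finset.sum_congr rfl fun ω _ => ?_
  rcases (hp ω).eq_or_lt with h0 | h0
  · simp [← h0]
  have hpos : ∀ {δ : Type} [Fintype δ] (X : Ω → δ), distOf p X (X ω) ≠ 0 :=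
    fun X => (h0.trans_le (le_distOf_apply hp X ω)).ne'
  rw [cmiRatio, logb_div (mul_ne_zero (hpos _) (hpos _)) (mul_ne_zero (hpos _) (hpos C)),
    logb_mul (hpos _) (hpos _), logb_mul (hpos _) (hpos C)]
  ring

lemma sum_distOf_mul_cmiRatio_le (hp : ∀ ω, 0 ≤ p ω) (A : Ω → α) (B : Ω → β) (C : Ω → γ) :
    ∑ x, distOf p (fun ω => (A ω, B ω, C ω)) x * cmiRatio p A B C x ≤ ∑ ω, p ω := by
  set dAC := distOf p (fun ω => (A ω, C ω))
  set dBC := distOf p (fun ω => (B ω, C ω))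
  set dC := distOf p C
  have hterm : ∀ x : α × β × γ, distOf p (fun ω => (A ω, B ω, C ω)) x * cmiRatio p A B C x
      ≤ dAC (x.1, x.2.2) * dBC (x.2.1, x.2.2) / dC x.2.2 := by
    intro x
    rcases (distOf_nonneg hp _ x).eq_or_lt with h0 | h0
    · rw [← h0, zero_mul]
      exact div_nonneg (mul_nonneg (distOf_nonneg hp _ _) (distOf_nonneg hp _ _))
        (distOf_nonneg hp _ _)
    · rw [cmiRatio, mul_div_assoc', mul_div_mul_left _ _ h0.ne']
  calc _ ≤ ∑ x : α × β × γ, dAC (x.1, x.2.2) * dBC (x.2.1, x.2.2) / dC x.2.2 :=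
        Finset.sum_le_sum fun x _ => hterm x
    _ = ∑ c, (∑ a, dAC (a, c)) * (∑ b, dBC (b, c)) / dC c := by
        simp only [Fintype.sum_prod_type, Finset.sum_mul_sum, Finset.sum_div]
        exact (Finset.sum_congr rfl fun _ _ => Finset.sum_comm).trans Finset.sum_comm
    _ = ∑ ω, p ω := by
        simp only [dAC, dBC, dC, sum_distOf_prod_left, mul_self_div_self, sum_distOf]

lemma CMI_nonneg (hp : IsPMF p) (A : Ω → α) (B : Ω → β) (C : Ω → γ) : 0 ≤ CMI p A B C := by
  have hsum : ∑ ω, p ω * cmiRatio p A B C (A ω, B ω, C ω) ≤ ∑ ω, p ω := by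
    rw [← sum_distOf_mul p (fun ω => (A ω, B ω, C ω))]
    exact sum_distOf_mul_cmiRatio_le hp.1 A B C
  have hgibbs := Finset.univ.sum_mul_log_nonpos (fun ω _ => hp.1 ω) (fun ω _ h0 => ?_) hsum
  · rw [CMI_eq_neg_sum_logb_cmiRatio hp.1]
    simp only [logb, mul_div_assoc', ← Finset.sum_div]
    exact neg_nonneg.2 (div_nonpos_of_nonpos_of_nonneg hgibbs (log_nonneg one_le_two))
  · have hpos : ∀ {δ : Type} [Fintype δ] (X : Ω → δ), 0 < distOf p X (X ω) :=
      fun X => h0.trans_le (le_distOf_apply hp.1 X ω)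
    exact div_pos (mul_pos (hpos _) (hpos _)) (mul_pos (hpos _) (hpos C))

lemma MI_nonneg (hp : IsPMF p) (A : Ω → α) (B : Ω → β) : 0 ≤ MI p A B :=
  MI_eq_CMI_const hp A B ▸ CMI_nonneg hp A B _

end ConditionalMutualInformation

section Region

variable {Ω A0 A1 A2 B1 B2 : Type} [Fintype Ω] [Fintype A0] [Fintype A1] [Fintype A2]
  [Fintype B1] [Fintype B2] {p : Ω → ℝ}
  {U0 : Ω → A0} {U1 : Ω → A1} {U2 : Ω → A2} {Y1 : Ω → B1} {Y2 : Ω → B2}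

lemma RtOpt_some_left (hp : IsPMF p) {L1 : ℝ}
    (hL1 : MI p U0 Y1 + CMI p U1 (fun ω => (U2 ω, Y2 ω)) U0 ≤ L1) (L2 : Option ℝ) :
    RtOpt p U0 U1 U2 Y1 Y2 (some L1) L2 = RtOpt p U0 U1 U2 Y1 Y2 none L2 := by
  have hchain := CMI_prod_right p U1 U2 U0 Y2
  have hsplit := MI_prod_left p U1 Y1 U0
  have := MI_nonneg hp U0 Y1
  have := CMI_nonneg hp U1 U2 U0
  ext r
  simp only [RtOpt, Set.mem_ofPred_eq, Option.mem_def, Option.some.injEq, forall_eq',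
    reduceCtorEq, false_implies, forall_const, true_and]
  constructor
  · rintro ⟨h0, h0', -, h⟩
    exact ⟨h0, h0', h⟩
  · rintro ⟨h0, h0', hleak2, hii, hiv, hvi, hviii⟩
    exact ⟨h0, h0', ⟨by linarith, by linarith⟩, hleak2, hii, hiv, hvi, hviii⟩

lemma RtOpt_some_right (hp : IsPMF p) {L2 : ℝ}
    (hL2 : MI p U0 Y2 + CMI p U2 (fun ω => (U1 ω, Y1 ω)) U0 ≤ L2) (L1 : Option ℝ) :
    RtOpt p U0 U1 U2 Y1 Y2 L1 (some L2) = RtOpt p U0 U1 U2 Y1 Y2 L1 none := by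
  have hchain := CMI_prod_right p U2 U1 U0 Y1
  have hsplit := MI_prod_left p U2 Y2 U0
  have := CMI_comm p U2 U1 U0
  have := MI_nonneg hp U0 Y2
  have := CMI_nonneg hp U1 U2 U0
  ext r
  simp only [RtOpt, Set.mem_ofPred_eq, Option.mem_def, Option.some.injEq, forall_eq',
    reduceCtorEq, false_implies, forall_const, true_and]
  constructor
  · rintro ⟨h0, h0', hleak1, -, h⟩
    exact ⟨h0, h0', hleak1, h⟩
  · rintro ⟨h0, h0', hleak1, hii, hiv, hvi, hviii⟩
    exact ⟨h0, h0', hleak1, ⟨by linarith, by linarith⟩, hii, hiv, hvi, hviii⟩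

end Region

theorem inactive_leakage_general {Ω A0 A1 A2 B1 B2 : Type} [Fintype Ω] [Fintype A0]
    [Fintype A1] [Fintype A2] [Fintype B1] [Fintype B2]
    (p : Ω → ℝ) (hp : IsPMF p)
    (U0 : Ω → A0) (U1 : Ω → A1) (U2 : Ω → A2) (Y1 : Ω → B1) (Y2 : Ω → B2)
    (L1 L2 : ℝ) :
    (MI p U0 Y1 + CMI p U1 (fun ω => (U2 ω, Y2 ω)) U0 ≤ L1 →
      RtOpt p U0 U1 U2 Y1 Y2 (some L1) (some L2)
        = RtOpt p U0 U1 U2 Y1 Y2 none (some L2)) ∧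
    (MI p U0 Y2 + CMI p U2 (fun ω => (U1 ω, Y1 ω)) U0 ≤ L2 →
      RtOpt p U0 U1 U2 Y1 Y2 (some L1) (some L2)
        = RtOpt p U0 U1 U2 Y1 Y2 (some L1) none) ∧
    (MI p U0 Y1 + CMI p U1 (fun ω => (U2 ω, Y2 ω)) U0 ≤ L1 →
      MI p U0 Y2 + CMI p U2 (fun ω => (U1 ω, Y1 ω)) U0 ≤ L2 →
      RtOpt p U0 U1 U2 Y1 Y2 (some L1) (some L2)
        = RtOpt p U0 U1 U2 Y1 Y2 none none) :=
  ⟨fun h1 => RtOpt_some_left hp h1 _, fun h2 => RtOpt_some_right hp h2 _,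
    fun h1 h2 => (RtOpt_some_left hp h1 _).trans (RtOpt_some_right hp h2 _)⟩

/-- **Corollary 1 (inactive leakage constraints).** If a leakage threshold exceeds
its critical value, the corresponding leakage constraints become inactive. -/
theorem inactive_leakage {Ω A0 A1 A2 B1 B2 : Type} [Fintype Ω] [Fintype A0]
    [Fintype A1] [Fintype A2] [Fintype B1] [Fintype B2]
    (p : Ω → ℝ) (hp : IsPMF p)
    (U0 : Ω → A0) (U1 : Ω → A1) (U2 : Ω → A2) (Y1 : Ω → B1) (Y2 : Ω → B2)
    (L1 L2 : ℝ) (hL1 : 0 ≤ L1) (hL2 : 0 ≤ L2) :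
    (MI p U0 Y1 + CMI p U1 (fun ω => (U2 ω, Y2 ω)) U0 ≤ L1 →
      RtOpt p U0 U1 U2 Y1 Y2 (some L1) (some L2)
        = RtOpt p U0 U1 U2 Y1 Y2 none (some L2)) ∧
    (MI p U0 Y2 + CMI p U2 (fun ω => (U1 ω, Y1 ω)) U0 ≤ L2 →
      RtOpt p U0 U1 U2 Y1 Y2 (some L1) (some L2)
        = RtOpt p U0 U1 U2 Y1 Y2 (some L1) none) ∧
    (MI p U0 Y1 + CMI p U1 (fun ω => (U2 ω, Y2 ω)) U0 ≤ L1 →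
      MI p U0 Y2 + CMI p U2 (fun ω => (U1 ω, Y1 ω)) U0 ≤ L2 →
      RtOpt p U0 U1 U2 Y1 Y2 (some L1) (some L2)
        = RtOpt p U0 U1 U2 Y1 Y2 none none) :=
  inactive_leakage_general p hp U0 U1 U2 Y1 Y2 L1 L2
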